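/- For every well-formed suspension environment e, there exists a simple environment e' (i.e., one of the form (t₀,l₀)::(t₁,l₁)::…::(t_{n−1},l_{n−1})::nil, with n possibly zero, containing no merged-environment constructors at the top spine) such that e rewrites to e' by a finite sequence of merging rules (m2)–(m6). -/

import Mathlib

/-!
Normalize the two components of a merged environment first, then merge them. Two simple
environments merge completely provided each level on the spine of the left one bounds the level
of the environment below it: (m4) and (m5) consume the right environment, (m6) consumes the left
one and keeps that invariant, and (m2), (m3) end the process. The rules preserve the length and
do not increase the level, so the side conditions of an enclosing merge survive the normalization
of its components.
-/

mutual
inductive STerm : Type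
  | const : ℕ → STerm
  | var   : ℕ → STerm
  | app   : STerm → STerm → STerm
  | lam   : STerm → STerm
  | susp  : STerm → ℕ → ℕ → SEnv → STerm
inductive SEnv : Type
  | nil   : SEnv
  | cons  : STerm → ℕ → SEnv → SEnv
  | merge : SEnv → ℕ → ℕ → SEnv → SEnv
end

/-- Length of an environment. -/
def SEnv.len : SEnv → ℕ
  | .nil => 0
  | .cons _ _ e => 1 + e.len
  | .merge e1 nl1 ol2 _ => e1.len + (ol2 - nl1)

/-- Level of an environment. -/
def SEnv.lev : SEnv → ℕ
  | .nil => 0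
  | .cons _ n _ => n
  | .merge _ nl1 ol2 e2 => e2.lev + (nl1 - ol2)

mutual
/-- Well-formedness of suspension terms. -/
def STerm.wf : STerm → Prop
  | .const _ => True
  | .var _ => True
  | .app t1 t2 => t1.wf ∧ t2.wf
  | .lam t => t.wf
  | .susp t ol nl e => t.wf ∧ e.wf ∧ e.len = ol ∧ e.lev ≤ nl
/-- Well-formedness of suspension environments. -/
def SEnv.wf : SEnv → Prop
  | .nil => True
  | .cons t n e => t.wf ∧ e.wf ∧ e.lev ≤ n
  | .merge e1 nl1 ol2 e2 => e1.wf ∧ e2.wf ∧ e2.len = ol2 ∧ e1.lev ≤ nl1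
end

/-- A simple environment: no merged environments on the top spine. -/
def SEnv.simple : SEnv → Prop
  | .nil => True
  | .cons _ _ e => e.simple
  | .merge _ _ _ _ => False

mutual
/-- Compatible closure of the merging rules (m2)-(m6) (term side: only congruences). -/
inductive MStepT : STerm → STerm → Prop
  | appL : ∀ (t1 t1' t2 : STerm), MStepT t1 t1' → MStepT (.app t1 t2) (.app t1' t2)
  | appR : ∀ (t1 t2 t2' : STerm), MStepT t2 t2' → MStepT (.app t1 t2) (.app t1 t2')
  | lamC : ∀ (t t' : STerm), MStepT t t' → MStepT (.lam t) (.lam t')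
  | suspT : ∀ (t t' : STerm) (ol nl : ℕ) (e : SEnv),
      MStepT t t' → MStepT (.susp t ol nl e) (.susp t' ol nl e)
  | suspE : ∀ (t : STerm) (ol nl : ℕ) (e e' : SEnv),
      MStepE e e' → MStepT (.susp t ol nl e) (.susp t ol nl e')
/-- One step using a merging rule (m2)-(m6) anywhere. -/
inductive MStepE : SEnv → SEnv → Prop
  | m2 : ∀ (e1 : SEnv) (nl1 : ℕ), MStepE (.merge e1 nl1 0 .nil) e1
  | m3 : ∀ (ol2 : ℕ) (e2 : SEnv), MStepE (.merge .nil 0 ol2 e2) e2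
  | m4 : ∀ (nl1 ol2 : ℕ) (t : STerm) (l : ℕ) (e2 : SEnv), 1 ≤ nl1 →
      MStepE (.merge .nil nl1 ol2 (.cons t l e2)) (.merge .nil (nl1 - 1) (ol2 - 1) e2)
  | m5 : ∀ (t : STerm) (n : ℕ) (e1 : SEnv) (nl1 ol2 : ℕ) (s : STerm) (l : ℕ) (e2 : SEnv),
      n < nl1 →
      MStepE (.merge (.cons t n e1) nl1 ol2 (.cons s l e2))
             (.merge (.cons t n e1) (nl1 - 1) (ol2 - 1) e2)
  | m6 : ∀ (t : STerm) (n : ℕ) (e1 : SEnv) (ol2 : ℕ) (s : STerm) (l : ℕ) (e2 : SEnv),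
      MStepE (.merge (.cons t n e1) n ol2 (.cons s l e2))
             (.cons (.susp t ol2 l (.cons s l e2)) (l + (n - ol2))
                    (.merge e1 n ol2 (.cons s l e2)))
  | consT : ∀ (t t' : STerm) (n : ℕ) (e : SEnv),
      MStepT t t' → MStepE (.cons t n e) (.cons t' n e)
  | consE : ∀ (t : STerm) (n : ℕ) (e e' : SEnv),
      MStepE e e' → MStepE (.cons t n e) (.cons t n e')
  | mergeL : ∀ (e1 e1' : SEnv) (nl1 ol2 : ℕ) (e2 : SEnv),
      MStepE e1 e1' → MStepE (.merge e1 nl1 ol2 e2) (.merge e1' nl1 ol2 e2)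
  | mergeR : ∀ (e1 : SEnv) (nl1 ol2 : ℕ) (e2 e2' : SEnv),
      MStepE e2 e2' → MStepE (.merge e1 nl1 ol2 e2) (.merge e1 nl1 ol2 e2')
end

namespace SEnv

open Relation

def Graded : SEnv → Prop
  | .nil => True
  | .cons _ n e => e.Graded ∧ e.lev ≤ n
  | .merge _ _ _ _ => False

theorem Graded.simple : ∀ {e : SEnv}, e.Graded → e.simple
  | .nil, _ => trivial
  | .cons _ _ e, h => Graded.simple (e := e) h.1

def ReducesToGraded (e : SEnv) : Prop :=
  ∃ e', e'.Graded ∧ e'.len = e.len ∧ e'.lev ≤ e.lev ∧ ReflTransGen MStepE e e'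

theorem Graded.reducesToGraded {e : SEnv} (h : e.Graded) : e.ReducesToGraded :=
  ⟨e, h, rfl, le_rfl, .refl⟩

theorem ReducesToGraded.of_step {e e₁ : SEnv} (hstep : MStepE e e₁) (hlen : e₁.len = e.len)
    (hlev : e₁.lev ≤ e.lev) (h : e₁.ReducesToGraded) : e.ReducesToGraded := by
  obtain ⟨e', hg, hlen', hlev', hred⟩ := h
  exact ⟨e', hg, hlen'.trans hlen, hlev'.trans hlev, .head hstep hred⟩

theorem reflTransGen_cons (t : STerm) (n : ℕ) {e e' : SEnv} (h : ReflTransGen MStepE e e') :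
    ReflTransGen MStepE (.cons t n e) (.cons t n e') :=
  h.lift (fun x => cons t n x) (fun a b hs => MStepE.consE t n a b hs)

theorem reflTransGen_merge (nl1 ol2 : ℕ) {e1 e1' e2 e2' : SEnv}
    (h1 : ReflTransGen MStepE e1 e1') (h2 : ReflTransGen MStepE e2 e2') :
    ReflTransGen MStepE (.merge e1 nl1 ol2 e2) (.merge e1' nl1 ol2 e2') :=
  (h1.lift (fun x => merge x nl1 ol2 e2) fun a b hs => MStepE.mergeL a b nl1 ol2 e2 hs).trans
    (h2.lift (fun x => merge e1' nl1 ol2 x) fun a b hs => MStepE.mergeR e1' nl1 ol2 a b hs)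

theorem ReducesToGraded.cons (t : STerm) {n : ℕ} {e : SEnv} (h : e.ReducesToGraded)
    (hn : e.lev ≤ n) : (cons t n e).ReducesToGraded := by
  obtain ⟨e', hg, hlen, hlev, hred⟩ := h
  exact ⟨.cons t n e', ⟨hg, hlev.trans hn⟩, by simp only [len, hlen], le_rfl,
    reflTransGen_cons t n hred⟩

theorem reducesToGraded_merge {e1 e2 : SEnv} {nl1 ol2 : ℕ} (h1 : e1.Graded) (h2 : e2.Graded)
    (hlen : e2.len = ol2) (hlev : e1.lev ≤ nl1) : (merge e1 nl1 ol2 e2).ReducesToGraded := by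
  match e1, e2, h1, h2, nl1 with
  | e1, .nil, h1, _, nl1 =>
    simp only [len] at hlen
    subst hlen
    exact .of_step (.m2 e1 nl1) (by simp [len]) (by simpa [lev] using hlev)
      h1.reducesToGraded
  | .nil, .cons s l e2, _, h2, 0 =>
    subst hlen
    exact .of_step (.m3 _ _) (by simp [len]) (by simp [lev]) h2.reducesToGraded
  | .nil, .cons s l e2, _, h2, k + 1 =>
    obtain ⟨h2, hl⟩ := h2
    simp only [len] at hlen
    refine .of_step (.m4 (k + 1) ol2 s l e2 (by omega)) (by simp only [len]; omega)
      (by simp only [lev]; omega) ?_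
    exact reducesToGraded_merge trivial h2 (by omega) (Nat.zero_le _)
  | .cons t n e1, .cons s l e2, h1, h2, nl1 =>
    simp only [len] at hlen
    simp only [lev] at hlev
    have hl : e2.lev ≤ l := h2.2
    rcases hlev.lt_or_eq with hlt | rfl
    · refine .of_step (.m5 t n e1 nl1 ol2 s l e2 hlt) (by simp only [len]; omega)
        (by simp only [lev]; omega) ?_
      exact reducesToGraded_merge h1 h2.1 (by omega) (by simp only [lev]; omega)
    · obtain ⟨f, hg, hflen, hflev, hred⟩ :=
        reducesToGraded_merge h1.1 h2 (by simp only [len]; omega) h1.2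
      refine ⟨.cons (.susp t ol2 l (.cons s l e2)) (l + (n - ol2)) f, ⟨hg, hflev⟩, ?_, le_rfl,
        .head (.m6 t n e1 ol2 s l e2) (reflTransGen_cons _ _ hred)⟩
      simp only [len] at hflen ⊢
      omega
termination_by sizeOf e1 + sizeOf e2

theorem reducesToGraded_of_wf : ∀ {e : SEnv}, e.wf → e.ReducesToGraded
  | .nil, _ => Graded.reducesToGraded trivial
  | .cons t n e, ⟨_, hwf, hn⟩ => (reducesToGraded_of_wf hwf).cons t hn
  | .merge e1 nl1 ol2 e2, ⟨hwf1, hwf2, hlen, hlev⟩ => by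
    obtain ⟨e1', hg1, hlen1, hlev1, hred1⟩ := reducesToGraded_of_wf hwf1
    obtain ⟨e2', hg2, hlen2, hlev2, hred2⟩ := reducesToGraded_of_wf hwf2
    obtain ⟨f, hg, hflen, hflev, hred⟩ :=
      reducesToGraded_merge hg1 hg2 (hlen2.trans hlen) (hlev1.trans hlev)
    refine ⟨f, hg, ?_, ?_, (reflTransGen_merge nl1 ol2 hred1 hred2).trans hred⟩
    · simp only [len] at hflen ⊢
      omega
    · simp only [lev] at hflev ⊢
      omega

end SEnv

/-- every well-formed environment rewrites by the merging rules
(m2)-(m6) to a simple environment. -/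
theorem stmt2 (e : SEnv) (hwf : e.wf) :
    ∃ e' : SEnv, e'.simple ∧ Relation.ReflTransGen MStepE e e' := by
  obtain ⟨e', hg, -, -, hred⟩ := SEnv.reducesToGraded_of_wf hwf
  exact ⟨e', hg.simple, hred⟩
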